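/- Let C ⊆ ℝ^d be a closed convex cone and let μ be a probability measure on ℝ^d with L_μ(x) < ∞ for all x ∈ C. If lim_{t→∞} L_μ(tu) = ∞ for every unit vector u ∈ C, then L_μ attains a global minimum on C, i.e., there exists x₀ ∈ C with L_μ(x₀) = inf_{x ∈ C} L_μ(x). -/

import Mathlib

open MeasureTheory ProbabilityTheory Filter
open scoped ENNReal RealInnerProductSpace Topology

/-- The Laplace transform of a measure `μ` on `ℝ^d`, with values in `ℝ≥0∞`. -/
noncomputable def laplace {d : ℕ} (μ : Measure (EuclideanSpace ℝ (Fin d)))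
    (x : EuclideanSpace ℝ (Fin d)) : ℝ≥0∞ :=
  ∫⁻ y, ENNReal.ofReal (Real.exp ⟪x, y⟫) ∂μ

/-!
By Fatou's lemma `L_μ` is lower semicontinuous, and it blows up along every direction `v` with
`μ {⟪v, ·⟫ > 0} > 0`. Coercivity along a unit vector `u ∈ C` rules out `⟪u, ·⟫ ≤ 0` a.e., since
then `L_μ (t • u) ≤ 1` for all `t ≥ 0`. A nonzero direction in the asymptotic cone of a sublevel set
`C ∩ {L_μ ≤ c}` lies in `C`, so these sets are bounded, hence compact, and `L_μ` attains its minimum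
over `C` on the nonempty one with `c = L_μ 0`.
-/

theorem LowerSemicontinuousOn.exists_isMinOn_of_isCompact_inter_preimage_Iic
    {α β : Type*} [TopologicalSpace α] [LinearOrder β] {f : α → β} {s : Set α}
    (hf : LowerSemicontinuousOn f s) {a : α} (ha : a ∈ s)
    (hK : IsCompact (s ∩ f ⁻¹' Set.Iic (f a))) : ∃ x ∈ s, IsMinOn f s x := by
  obtain ⟨x, hxK, hx⟩ := (hf.mono Set.inter_subset_left).exists_isMinOn
    (show (s ∩ f ⁻¹' Set.Iic (f a)).Nonempty from ⟨a, ha, le_rfl⟩) hK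
  refine ⟨x, hxK.1, fun y hy => ?_⟩
  by_cases hya : f y ≤ f a
  · exact hx ⟨hy, hya⟩
  · exact (hx ⟨ha, le_rfl⟩).trans (not_le.1 hya).le

theorem tendsto_lintegral_top_of_tendsto_top {α ι : Type*} [MeasurableSpace α] {μ : Measure α}
    {l : Filter ι} [l.NeBot] [l.IsCountablyGenerated] {f : ι → α → ℝ≥0∞}
    (hf : ∀ i, Measurable (f i)) {s : Set α} (hs : MeasurableSet s) (hμs : μ s ≠ 0)
    (hlim : ∀ a ∈ s, Tendsto (fun i => f i a) l (𝓝 ⊤)) :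
    Tendsto (fun i => ∫⁻ a, f i a ∂μ) l (𝓝 ⊤) := by
  refine tendsto_of_le_liminf_of_limsup_le ?_ le_top
  calc ⊤ = ∫⁻ a, s.indicator (fun _ => ⊤) a ∂μ := by
        rw [lintegral_indicator_const hs, ENNReal.top_mul hμs]
    _ ≤ ∫⁻ a, liminf (fun i => f i a) l ∂μ := lintegral_mono fun a => by
        by_cases ha : a ∈ s
        · simp [ha, (hlim a ha).liminf_eq]
        · simp [ha]
    _ ≤ liminf (fun i => ∫⁻ a, f i a ∂μ) l := lintegral_liminf_le hf

section Laplace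

open AffineSpace

variable {d : ℕ} (μ : Measure (EuclideanSpace ℝ (Fin d)))

theorem laplace_zero : laplace μ 0 = μ Set.univ := by
  simp [laplace]

theorem lowerSemicontinuous_laplace : LowerSemicontinuous (laplace μ) := by
  refine lowerSemicontinuous_iff_le_liminf.2 fun x => ?_
  calc laplace μ x = ∫⁻ y, liminf (fun z => ENNReal.ofReal (Real.exp ⟪z, y⟫)) (𝓝 x) ∂μ :=
        lintegral_congr fun y => Eq.symm <| Tendsto.liminf_eq <|
          (ENNReal.continuous_ofReal.tendsto _).comp
            ((Real.continuous_exp.tendsto _).comp (tendsto_id.inner tendsto_const_nhds))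
    _ ≤ liminf (laplace μ) (𝓝 x) := lintegral_liminf_le fun z => by fun_prop

theorem tendsto_laplace_asymptoticNhds {v : EuclideanSpace ℝ (Fin d)}
    (hv : μ {y | 0 < ⟪v, y⟫} ≠ 0) :
    Tendsto (laplace μ) (asymptoticNhds ℝ (EuclideanSpace ℝ (Fin d)) v) (𝓝 ⊤) := by
  rw [asymptoticNhds_eq_smul, ← map₂_smul, ← map_prod_eq_map₂, tendsto_map'_iff]
  refine tendsto_lintegral_top_of_tendsto_top (fun p => by fun_prop)
    (measurableSet_lt measurable_const (by fun_prop)) hv fun y hy => ?_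
  have hinner : Tendsto (fun p : ℝ × EuclideanSpace ℝ (Fin d) => ⟪p.1 • p.2, y⟫)
      (atTop ×ˢ 𝓝 v) atTop := by
    simp_rw [real_inner_smul_left]
    exact tendsto_fst.atTop_mul_pos hy (tendsto_snd.inner tendsto_const_nhds)
  exact ENNReal.tendsto_ofReal_atTop.comp (Real.tendsto_exp_atTop.comp hinner)

theorem measure_inner_pos_ne_zero_of_tendsto_laplace [IsFiniteMeasure μ]
    {u : EuclideanSpace ℝ (Fin d)}
    (hu : Tendsto (fun t : ℝ => laplace μ (t • u)) atTop (𝓝 ⊤)) :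
    μ {y | 0 < ⟪u, y⟫} ≠ 0 := by
  intro hμ
  have hbound : ∀ t : ℝ, 0 ≤ t → laplace μ (t • u) ≤ μ Set.univ := fun t ht => by
    rw [← lintegral_one]
    refine lintegral_mono_ae ((measure_eq_zero_iff_ae_notMem.1 hμ).mono fun y hy => ?_)
    simpa [real_inner_smul_left] using mul_nonpos_of_nonneg_of_nonpos ht (not_lt.1 hy)
  obtain ⟨t, hlt, ht⟩ :=
    ((hu.eventually (lt_mem_nhds (measure_lt_top μ Set.univ))).and
      (eventually_ge_atTop 0)).exists
  exact not_lt.2 (hbound t ht) hlt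

theorem isBounded_inter_preimage_laplace_Iic [IsFiniteMeasure μ]
    {C : Set (EuclideanSpace ℝ (Fin d))} (hCclosed : IsClosed C)
    (hCcone : ∀ c : ℝ, 0 ≤ c → ∀ x ∈ C, c • x ∈ C)
    (hcoercive : ∀ u ∈ C, ‖u‖ = 1 → Tendsto (fun t : ℝ => laplace μ (t • u)) atTop (𝓝 ⊤))
    {c : ℝ≥0∞} (hc : c ≠ ⊤) : Bornology.IsBounded (C ∩ laplace μ ⁻¹' Set.Iic c) := by
  refine isBounded_iff_asymptoticCone_subset_singleton.2 fun v hv => ?_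
  by_contra hv0
  have hvC : v ∈ C := by
    have := asymptoticCone_mono (k := ℝ) Set.inter_subset_left hv
    rwa [asymptoticCone_eq_closure_of_forall_smul_mem fun c hc => hCcone c hc.le,
      hCclosed.closure_eq] at this
  have hnorm : 0 < ‖v‖⁻¹ := inv_pos.2 (norm_pos_iff.2 hv0)
  have hblow := tendsto_laplace_asymptoticNhds μ
    (measure_inner_pos_ne_zero_of_tendsto_laplace μ
      (hcoercive _ (hCcone _ hnorm.le v hvC) (norm_smul_inv_norm hv0)))
  rw [asymptoticNhds_smul v hnorm] at hblow
  obtain ⟨x, ⟨-, hxc⟩, hcx⟩ :=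
    (mem_asymptoticCone_iff.1 hv).and_eventually (hblow.eventually (lt_mem_nhds hc.lt_top))
      |>.exists
  exact not_lt.2 hxc hcx

end Laplace

theorem laplace_attains_min_of_coercive_general
    {d : ℕ}
    (C : Set (EuclideanSpace ℝ (Fin d)))
    (hCclosed : IsClosed C)
    (hCcone : ∀ c : ℝ, 0 ≤ c → ∀ x ∈ C, c • x ∈ C)
    (hCne : C.Nonempty)
    (μ : Measure (EuclideanSpace ℝ (Fin d))) [IsProbabilityMeasure μ]
    (hcoercive : ∀ u ∈ C, ‖u‖ = 1 →
      Tendsto (fun t : ℝ => laplace μ (t • u)) atTop (𝓝 ⊤)) :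
    ∃ x₀ ∈ C, laplace μ x₀ = ⨅ x ∈ C, laplace μ x := by
  obtain ⟨w, hw⟩ := hCne
  have h0 : (0 : EuclideanSpace ℝ (Fin d)) ∈ C := by simpa using hCcone 0 le_rfl w hw
  have hK : IsCompact (C ∩ laplace μ ⁻¹' Set.Iic (laplace μ 0)) :=
    Metric.isCompact_of_isClosed_isBounded
      (hCclosed.inter ((lowerSemicontinuous_laplace μ).isClosed_preimage _))
      (isBounded_inter_preimage_laplace_Iic μ hCclosed hCcone hcoercive
        (by simp [laplace_zero]))
  obtain ⟨x₀, hx₀, hmin⟩ := ((lowerSemicontinuous_laplace μ).lowerSemicontinuousOn C)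
    |>.exists_isMinOn_of_isCompact_inter_preimage_Iic h0 hK
  exact ⟨x₀, hx₀, le_antisymm (le_iInf₂ fun x hx => hmin hx) (iInf₂_le x₀ hx₀)⟩

/-- **Coercivity implies existence of a global minimum**: if `L_μ` is finite on the closed
convex cone `C` and `L_μ(tu) → ∞` as `t → ∞` for every unit vector `u ∈ C`, then `L_μ`
attains its infimum on `C`. -/
theorem laplace_attains_min_of_coercive
    {d : ℕ} (hd : 1 ≤ d)
    (C : Set (EuclideanSpace ℝ (Fin d)))
    (hCclosed : IsClosed C) (hCconvex : Convex ℝ C)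
    (hCcone : ∀ c : ℝ, 0 ≤ c → ∀ x ∈ C, c • x ∈ C)
    (hCne : C.Nonempty)
    (μ : Measure (EuclideanSpace ℝ (Fin d))) [IsProbabilityMeasure μ]
    (hfin : ∀ x ∈ C, laplace μ x < ⊤)
    (hcoercive : ∀ u ∈ C, ‖u‖ = 1 →
      Tendsto (fun t : ℝ => laplace μ (t • u)) atTop (𝓝 ⊤)) :
    ∃ x₀ ∈ C, laplace μ x₀ = ⨅ x ∈ C, laplace μ x :=
  laplace_attains_min_of_coercive_general C hCclosed hCcone hCne μ hcoercive
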